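/- arXiv:1708.08473 — 2 statements merged into one kernel-verified Lean document; each statement's English description precedes it below -/
import Mathlib

section
/- Fix symmetric positive definite real 3×3 matrices C and Cᵢ⁰ with det Cᵢ⁰ = 1, constants c₁₀ > 0, c₀₁ ≥ 0 and η > 0, and set C̄ := (det C)^{-1/3}·C. For Δt > 0 define the IFEBM update: λ := Δt·c₁₀/η, ε := Δt·c₀₁/η, A := C̄^{-1/2}·(Cᵢ⁰ + λ·C̄)·C̄^{-1/2}, φ₀ := (det A)^{1/3}, φ := φ₀ − (tr A/(3φ₀))·ε, X(Δt) := 2·A·(sqrt(φ²·I + 4ε·A) + φ·I)⁻¹, and Cᵢ(Δt) := (det(C^{1/2}·X(Δt)·C^{1/2}))^{-1/3}·C^{1/2}·X(Δt)·C^{1/2}. Then X(Δt) → I and Cᵢ(Δt) → C̄ as Δt → ∞. That is, the iteration-free Euler backward method reproduces complete stress relaxation in the limit of infinitely large time steps. -/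
open Matrix Filter

abbrev Mat := Matrix (Fin 3) (Fin 3) ℝ

/-- The unimodular part of a matrix. -/
noncomputable def unimod (M : Mat) : Mat := (M.det ^ (-(1 : ℝ) / 3)) • M

/-- The unique positive semidefinite square root of a positive semidefinite matrix
(junk value `0` on matrices that are not positive semidefinite). -/
noncomputable def msqrt (M : Mat) : Mat := by
  classical exact if h : M.PosSemidef then
    h.1.eigenvectorUnitary.1 * diagonal ((↑) ∘ (√·) ∘ h.1.eigenvalues) *
      (star h.1.eigenvectorUnitary : Mat) else 0

/-- The matrix `A = C̄^{-1/2}·(Cᵢ⁰ + λ·C̄)·C̄^{-1/2}` of the IFEBM update. -/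
noncomputable def ifebmA (lam : ℝ) (C Ci : Mat) : Mat :=
  (msqrt (unimod C))⁻¹ * (Ci + lam • unimod C) * (msqrt (unimod C))⁻¹

/-- The scalar `φ = φ₀ − (tr A/(3φ₀))·ε` of the IFEBM update, `φ₀ = (det A)^{1/3}`. -/
noncomputable def ifebmPhi (lam eps : ℝ) (C Ci : Mat) : ℝ :=
  (ifebmA lam C Ci).det ^ ((1 : ℝ) / 3) -
    (ifebmA lam C Ci).trace / (3 * (ifebmA lam C Ci).det ^ ((1 : ℝ) / 3)) * eps

/-- The matrix `X = 2·A·(sqrt(φ²·I + 4ε·A) + φ·I)⁻¹` of the IFEBM update. -/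
noncomputable def ifebmX (lam eps : ℝ) (C Ci : Mat) : Mat :=
  (2 : ℝ) • ifebmA lam C Ci *
    (msqrt ((ifebmPhi lam eps C Ci) ^ 2 • (1 : Mat) + (4 * eps) • ifebmA lam C Ci) +
      (ifebmPhi lam eps C Ci) • (1 : Mat))⁻¹

/-- The IFEBM updated internal variable `Cᵢ = unimod (C^{1/2}·X·C^{1/2})`. -/
noncomputable def ifebmCi (lam eps : ℝ) (C Ci : Mat) : Mat :=
  unimod (msqrt C * ifebmX lam eps C Ci * msqrt C)

/-! Write `S = C̄^{1/2}`. Since `S⁻¹ C̄ S⁻¹ = I`, the matrix `A` equals `B + λ I` with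
`B = S⁻¹ Cᵢ⁰ S⁻¹`. The update `(A, ε) ↦ X` is invariant under `(A, ε) ↦ (c A, c ε)` for `c > 0`,
because `φ` and the square root both scale by `c`. With `ε = r λ`, `r = c₀₁ / c₁₀`, the update at
time step `Δt` is therefore the update at `(I + λ⁻¹ B, r)`. As `λ → ∞` this argument tends to `I`
through positive semidefinite matrices, on which the radicand `φ² I + 4 r A` stays positive
semidefinite and the square root is continuous; at `A = I` one gets `φ = 1 - r` and
`X = 2 I ((1 + r) I + (1 - r) I)⁻¹ = I`. Continuity of `unimod` at `C` then gives `Cᵢ → C̄`. -/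

open Topology
open scoped MatrixOrder

lemma Matrix.inv_smul_of_ne_zero {n K : Type*} [Fintype n] [DecidableEq n] [Field K] {c : K}
    (hc : c ≠ 0) (M : Matrix n n K) : (c • M)⁻¹ = c⁻¹ • M⁻¹ := by
  by_cases hM : IsUnit M.det
  · exact inv_smul' M (Units.mk0 c hc) hM
  · have hcM : ¬IsUnit (c • M).det := by
      simpa [det_smul, hc] using hM
    rw [nonsing_inv_apply_not_isUnit _ hM, nonsing_inv_apply_not_isUnit _ hcM, smul_zero]

lemma Matrix.continuousAt_inv_of_det_ne_zero {n K : Type*} [Fintype n] [DecidableEq n]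
    [NormedField K] {M : Matrix n n K} (hM : M.det ≠ 0) : ContinuousAt Inv.inv M :=
  continuousAt_matrix_inv M <| by
    simpa only [Ring.inverse_eq_inv'] using continuousAt_inv₀ hM

lemma msqrt_eq_cfcSqrt {M : Mat} (hM : M.PosSemidef) : msqrt M = CFC.sqrt M := by
  rw [CFC.sqrt_eq_real_sqrt M hM.nonneg, cfcₙ_eq_cfc, hM.1.cfc_eq, msqrt, dif_pos hM]
  simp only [IsHermitian.cfc, RCLike.ofReal_real_eq_id, CompTriple.comp_eq,
    Unitary.conjStarAlgAut_apply]
  rfl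

lemma msqrt_of_not_posSemidef {M : Mat} (hM : ¬M.PosSemidef) : msqrt M = 0 := by
  simp [msqrt, hM]

lemma posSemidef_msqrt {M : Mat} (hM : M.PosSemidef) : (msqrt M).PosSemidef := by
  rw [msqrt_eq_cfcSqrt hM, ← nonneg_iff_posSemidef]
  exact CFC.sqrt_nonneg M

lemma msqrt_mul_self {M : Mat} (hM : M.PosSemidef) : msqrt M * msqrt M = M := by
  rw [msqrt_eq_cfcSqrt hM]
  exact CFC.sqrt_mul_sqrt_self M hM.nonneg

lemma msqrt_one : msqrt 1 = 1 := by
  rw [msqrt_eq_cfcSqrt .one, CFC.sqrt_one]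

lemma msqrt_sq_smul {c : ℝ} (hc : 0 < c) (M : Mat) : msqrt (c ^ 2 • M) = c • msqrt M := by
  by_cases hM : M.PosSemidef
  · have hcM : (c • msqrt M).PosSemidef := (posSemidef_msqrt hM).smul hc.le
    rw [msqrt_eq_cfcSqrt (hM.smul (sq_nonneg c))]
    conv_lhs => rw [← msqrt_mul_self hM, sq, mul_smul, ← smul_mul_assoc, ← mul_smul_comm]
    exact CFC.sqrt_mul_self _ hcM.nonneg
  · have hcM : ¬(c ^ 2 • M).PosSemidef := fun h => hM <| by
      simpa [smul_smul, hc.ne'] using h.smul (inv_nonneg.mpr (sq_nonneg c))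
    rw [msqrt_of_not_posSemidef hM, msqrt_of_not_posSemidef hcM, smul_zero]

lemma continuousOn_msqrt : ContinuousOn msqrt {M : Mat | M.PosSemidef} := by
  -- The operator norm is only needed to invoke the C⋆-algebra result; it induces the
  -- product topology of `Mat`.
  have h : ContinuousOn (CFC.sqrt : Mat → Mat) {M : Mat | 0 ≤ M} := by
    open scoped Matrix.Norms.L2Operator in exact CFC.continuousOn_sqrt
  simp only [nonneg_iff_posSemidef] at h
  exact h.congr fun M hM => msqrt_eq_cfcSqrt hM

lemma posDef_unimod {M : Mat} (hM : M.PosDef) : (unimod M).PosDef :=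
  hM.smul (Real.rpow_pos_of_pos hM.det_pos _)

lemma continuousAt_unimod {M : Mat} (hM : M.det ≠ 0) : ContinuousAt unimod M :=
  ((Real.continuousAt_rpow_const _ _ (Or.inl hM)).comp
    continuous_id.matrix_det.continuousAt).smul continuousAt_id

lemma inv_msqrt_mul_mul_inv_msqrt {M : Mat} (hM : M.PosDef) :
    (msqrt M)⁻¹ * M * (msqrt M)⁻¹ = 1 := by
  have hS := msqrt_mul_self hM.posSemidef
  have hdet : IsUnit (msqrt M).det := by
    refine isUnit_iff_ne_zero.mpr fun h => hM.det_pos.ne' ?_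
    rw [← hS, det_mul, h, zero_mul]
  calc (msqrt M)⁻¹ * M * (msqrt M)⁻¹ = (msqrt M)⁻¹ * msqrt M * (msqrt M * (msqrt M)⁻¹) := by
        conv_lhs => enter [1, 2]; rw [← hS]
        simp only [mul_assoc]
    _ = 1 := by rw [nonsing_inv_mul _ hdet, mul_nonsing_inv _ hdet, one_mul]

lemma ifebmA_eq_add_smul_one {C : Mat} (hC : C.PosDef) (lam : ℝ) (Ci : Mat) :
    ifebmA lam C Ci = ifebmA 0 C Ci + lam • 1 := by
  simp only [ifebmA, zero_smul, add_zero, mul_add, add_mul, mul_smul_comm, smul_mul_assoc,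
    inv_msqrt_mul_mul_inv_msqrt (posDef_unimod hC)]

lemma posSemidef_ifebmA {C Ci : Mat} {lam : ℝ} (hC : C.PosDef) (hCi : Ci.PosSemidef)
    (hlam : 0 ≤ lam) : (ifebmA lam C Ci).PosSemidef := by
  have hS := (posSemidef_msqrt (posDef_unimod hC).posSemidef).inv
  have h := (hCi.add ((posDef_unimod hC).posSemidef.smul hlam)).conjTranspose_mul_mul_same
    (msqrt (unimod C))⁻¹
  rwa [hS.isHermitian.eq] at h

lemma tendsto_inv_smul_ifebmA {C Ci : Mat} (hC : C.PosDef) (hCi : Ci.PosSemidef) :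
    Tendsto (fun lam : ℝ => lam⁻¹ • ifebmA lam C Ci) atTop (𝓝[{A | A.PosSemidef}] 1) := by
  refine tendsto_nhdsWithin_iff.mpr ⟨?_, ?_⟩
  · have h : Tendsto (fun lam : ℝ => lam⁻¹ • ifebmA 0 C Ci + 1) atTop
        (𝓝 ((0 : ℝ) • ifebmA 0 C Ci + 1)) :=
      (tendsto_inv_atTop_zero.smul_const _).add_const _
    rw [zero_smul, zero_add] at h
    refine h.congr' ?_
    filter_upwards [eventually_ne_atTop 0] with lam hlam
    rw [ifebmA_eq_add_smul_one hC lam, smul_add, smul_smul, inv_mul_cancel₀ hlam, one_smul]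
  · filter_upwards [eventually_ge_atTop 0] with lam hlam
    exact (posSemidef_ifebmA hC hCi hlam).smul (inv_nonneg.mpr hlam)

noncomputable def ifebmPhiOf (A : Mat) (eps : ℝ) : ℝ :=
  A.det ^ ((1 : ℝ) / 3) - A.trace / (3 * A.det ^ ((1 : ℝ) / 3)) * eps

noncomputable def ifebmXOf (A : Mat) (eps : ℝ) : Mat :=
  (2 : ℝ) • A * (msqrt (ifebmPhiOf A eps ^ 2 • (1 : Mat) + (4 * eps) • A) +
    ifebmPhiOf A eps • (1 : Mat))⁻¹

lemma ifebmX_eq_ifebmXOf (lam eps : ℝ) (C Ci : Mat) :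
    ifebmX lam eps C Ci = ifebmXOf (ifebmA lam C Ci) eps := rfl

lemma ifebmPhiOf_smul {A : Mat} {c : ℝ} (hc : 0 < c) (hA : 0 ≤ A.det) (eps : ℝ) :
    ifebmPhiOf (c • A) (c * eps) = c * ifebmPhiOf A eps := by
  have hroot : (c • A).det ^ ((1 : ℝ) / 3) = c * A.det ^ ((1 : ℝ) / 3) := by
    rw [det_smul, Fintype.card_fin, Real.mul_rpow (by positivity) hA, ← Real.rpow_natCast,
      ← Real.rpow_mul hc.le]
    norm_num
  rw [ifebmPhiOf, ifebmPhiOf, hroot, trace_smul, smul_eq_mul]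
  by_cases h0 : A.det ^ ((1 : ℝ) / 3) = 0
  · rw [h0]
    simp
  · field_simp

lemma ifebmXOf_smul {A : Mat} {c : ℝ} (hc : 0 < c) (hA : 0 ≤ A.det) (eps : ℝ) :
    ifebmXOf (c • A) (c * eps) = ifebmXOf A eps := by
  have hrad : ifebmPhiOf (c • A) (c * eps) ^ 2 • (1 : Mat) + (4 * (c * eps)) • (c • A) =
      c ^ 2 • (ifebmPhiOf A eps ^ 2 • (1 : Mat) + (4 * eps) • A) := by
    rw [ifebmPhiOf_smul hc hA, smul_add, smul_smul, smul_smul, smul_smul]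
    congr 2 <;> ring
  rw [ifebmXOf, ifebmXOf, hrad, msqrt_sq_smul hc, ifebmPhiOf_smul hc hA,
    mul_smul c (ifebmPhiOf A eps), ← smul_add, inv_smul_of_ne_zero hc.ne', smul_comm,
    smul_mul_smul_comm, mul_inv_cancel₀ hc.ne', one_smul]

lemma ifebmX_eq_ifebmXOf_inv_smul {C Ci : Mat} (hC : C.PosDef) (hCi : Ci.PosSemidef) {lam : ℝ}
    (hlam : 0 < lam) (r : ℝ) :
    ifebmX lam (lam * r) C Ci = ifebmXOf (lam⁻¹ • ifebmA lam C Ci) r := by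
  have hdet : 0 ≤ (lam⁻¹ • ifebmA lam C Ci).det :=
    ((posSemidef_ifebmA hC hCi hlam.le).smul (inv_nonneg.mpr hlam.le)).det_nonneg
  rw [ifebmX_eq_ifebmXOf, ← ifebmXOf_smul hlam hdet, smul_inv_smul₀ hlam.ne']

lemma tendsto_ifebmPhiOf_one (eps : ℝ) :
    Tendsto (ifebmPhiOf · eps) (𝓝 1) (𝓝 (1 - eps)) := by
  have hroot : ContinuousAt (fun A : Mat => A.det ^ ((1 : ℝ) / 3)) 1 :=
    (Real.continuousAt_rpow_const _ _ (Or.inl (by simp))).comp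
      continuous_id.matrix_det.continuousAt
  have hcont : ContinuousAt (ifebmPhiOf · eps) 1 :=
    hroot.sub ((continuous_id.matrix_trace.continuousAt.div (continuousAt_const.mul hroot)
      (by simp)).mul continuousAt_const)
  simpa [ifebmPhiOf] using hcont.tendsto

lemma tendsto_ifebmXOf_one {eps : ℝ} (heps : 0 ≤ eps) :
    Tendsto (ifebmXOf · eps) (𝓝[{A | A.PosSemidef}] 1) (𝓝 1) := by
  have hA : Tendsto (fun A : Mat => A) (𝓝[{A | A.PosSemidef}] 1) (𝓝 1) :=
    tendsto_id.mono_left nhdsWithin_le_nhds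
  have hphi := (tendsto_ifebmPhiOf_one eps).mono_left
    (nhdsWithin_le_nhds (s := {A : Mat | A.PosSemidef}))
  have hrad : Tendsto (fun A => ifebmPhiOf A eps ^ 2 • (1 : Mat) + (4 * eps) • A)
      (𝓝[{A | A.PosSemidef}] 1) (𝓝[{A | A.PosSemidef}] ((1 + eps) ^ 2 • (1 : Mat))) := by
    refine tendsto_nhdsWithin_iff.mpr ⟨?_, ?_⟩
    · convert ((hphi.pow 2).smul_const (1 : Mat)).add (hA.const_smul (4 * eps)) using 2
      rw [← add_smul]
      ring_nf
    · filter_upwards [self_mem_nhdsWithin] with A hA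
      exact (PosSemidef.one.smul (sq_nonneg _)).add (hA.smul (by positivity))
  have hroot := (continuousOn_msqrt.continuousWithinAt
    (PosSemidef.one.smul (sq_nonneg (1 + eps)))).tendsto.comp hrad
  rw [msqrt_sq_smul (by positivity), msqrt_one] at hroot
  have hden := hroot.add (hphi.smul_const (1 : Mat))
  have htwo : (1 + eps) • (1 : Mat) + (1 - eps) • 1 = (2 : ℝ) • 1 := by
    rw [← add_smul]
    ring_nf
  rw [htwo] at hden
  have hinv := (continuousAt_inv_of_det_ne_zero (by simp)).tendsto.comp hden
  have hlim : (2 : ℝ) • (1 : Mat) * ((2 : ℝ) • 1)⁻¹ = 1 := by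
    rw [inv_smul_of_ne_zero two_ne_zero, inv_one, smul_mul_smul_comm, mul_inv_cancel₀ two_ne_zero,
      one_smul, one_mul]
  have hX := (hA.const_smul (2 : ℝ)).mul hinv
  rw [hlim] at hX
  exact hX

theorem ifebm_complete_relaxation_general (C Ci0 : Mat) (hC : C.PosDef) (hCi0 : Ci0.PosDef)
    (c10 c01 η : ℝ) (hc10 : 0 < c10) (hc01 : 0 ≤ c01) (hη : 0 < η) :
    Tendsto (fun dt : ℝ => ifebmX (dt * c10 / η) (dt * c01 / η) C Ci0) atTop
        (nhds (1 : Mat)) ∧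
      Tendsto (fun dt : ℝ => ifebmCi (dt * c10 / η) (dt * c01 / η) C Ci0) atTop
        (nhds (unimod C)) := by
  have hlam : Tendsto (fun dt : ℝ => dt * c10 / η) atTop atTop := by
    simpa only [mul_div_assoc, id] using tendsto_id.atTop_mul_const (div_pos hc10 hη)
  have hX : Tendsto (fun dt : ℝ => ifebmX (dt * c10 / η) (dt * c01 / η) C Ci0) atTop (𝓝 1) := by
    refine ((tendsto_ifebmXOf_one (div_nonneg hc01 hc10.le)).comp
      ((tendsto_inv_smul_ifebmA hC hCi0.posSemidef).comp hlam)).congr' ?_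
    filter_upwards [hlam.eventually_gt_atTop 0] with dt hdt
    have heps : dt * c01 / η = dt * c10 / η * (c01 / c10) := by field_simp
    rw [heps, ifebmX_eq_ifebmXOf_inv_smul hC hCi0.posSemidef hdt]
    rfl
  refine ⟨hX, ?_⟩
  have hconj : Tendsto (fun dt : ℝ => msqrt C * ifebmX (dt * c10 / η) (dt * c01 / η) C Ci0 *
      msqrt C) atTop (𝓝 C) := by
    have h := ((tendsto_const_nhds (x := msqrt C)).mul hX).mul (tendsto_const_nhds (x := msqrt C))
    rwa [mul_one, msqrt_mul_self hC.posSemidef] at h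
  exact (continuousAt_unimod hC.det_pos.ne').tendsto.comp hconj

/-- complete stress relaxation for infinitely large time steps:
with `λ = Δt·c₁₀/η` and `ε = Δt·c₀₁/η`, the IFEBM update satisfies
`X(Δt) → I` and `Cᵢ(Δt) → C̄` as `Δt → ∞`. -/
theorem ifebm_complete_relaxation (C Ci0 : Mat) (hC : C.PosDef) (hCi0 : Ci0.PosDef)
    (h1 : Ci0.det = 1) (c10 c01 η : ℝ) (hc10 : 0 < c10) (hc01 : 0 ≤ c01) (hη : 0 < η) :
    Tendsto (fun dt : ℝ => ifebmX (dt * c10 / η) (dt * c01 / η) C Ci0) atTop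
        (nhds (1 : Mat)) ∧
      Tendsto (fun dt : ℝ => ifebmCi (dt * c10 / η) (dt * c01 / η) C Ci0) atTop
        (nhds (unimod C)) :=
  ifebm_complete_relaxation_general C Ci0 hC hCi0 c10 c01 η hc10 hc01 hη
end

section
/- Let F be a real 3×3 matrix with det F > 0, let Cᵢ be a symmetric positive definite real 3×3 matrix with det Cᵢ = 1, and let c₁₀, c₀₁ ∈ ℝ. Define C := Fᵀ·F, C̄ := (det C)^{-1/3}·C, the elastic left Cauchy–Green tensor B_e := F·Cᵢ⁻¹·Fᵀ, B̄_e := (det B_e)^{-1/3}·B_e, and the second Piola–Kirchhoff stress T̃ := C⁻¹·(c₁₀·C̄·Cᵢ⁻¹ − c₀₁·Cᵢ·C̄⁻¹)^D. Then the push-forward of T̃ equals the Eulerian Mooney–Rivlin Kirchhoff stress: F·T̃·Fᵀ = c₁₀·(B̄_e)^D − c₀₁·(B̄_e⁻¹)^D. Hence the Lagrangian and Eulerian stress formulas of the multiplicative Maxwell fluid coincide. -/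
/-!
Write `C = FᵀF` and `Bₑ = F Cᵢ⁻¹ Fᵀ`. Then `Bₑ = F⁻ᵀ (C Cᵢ⁻¹) Fᵀ` and `F C⁻¹ = F⁻ᵀ`, so the
push-forward `X ↦ F (C⁻¹ X) Fᵀ` is conjugation by `Fᵀ`. Since `det Cᵢ = 1`, `C̄ Cᵢ⁻¹` is the unimodular
part of `C Cᵢ⁻¹` and `Cᵢ C̄⁻¹` is its inverse; conjugation commutes with taking unimodular parts,
inverses and deviators (determinant and trace are similarity invariants), which turns the Lagrangian
stress into the Eulerian one.
-/

open Matrix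

/-- The deviatoric part of a matrix. -/
noncomputable def dev (M : Mat) : Mat := M - (M.trace / 3) • (1 : Mat)

namespace Matrix

variable {n α : Type*} [Fintype n] [DecidableEq n] [CommRing α]

theorem inv_conj' {P : Matrix n n α} (hP : IsUnit P) (X : Matrix n n α) :
    (P⁻¹ * X * P)⁻¹ = P⁻¹ * X⁻¹ * P := by
  rw [Matrix.mul_inv_rev, Matrix.mul_inv_rev,
    nonsing_inv_nonsing_inv _ ((isUnit_iff_isUnit_det P).mp hP), mul_assoc]

end Matrix

theorem dev_smul (a : ℝ) (X : Mat) : dev (a • X) = a • dev X := by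
  simp only [dev, trace_smul, smul_sub, smul_smul, smul_eq_mul, mul_div_assoc]

theorem dev_sub (X Y : Mat) : dev (X - Y) = dev X - dev Y := by
  simp only [dev, trace_sub, sub_div, sub_smul]
  abel

theorem dev_conj' {P : Mat} (hP : IsUnit P) (X : Mat) : dev (P⁻¹ * X * P) = P⁻¹ * dev X * P := by
  have hP1 : P⁻¹ * (1 : Mat) * P = 1 := by
    rw [mul_one, nonsing_inv_mul _ ((isUnit_iff_isUnit_det P).mp hP)]
  rw [dev, dev, trace_conj' hP, mul_sub, sub_mul, mul_smul_comm, smul_mul_assoc, hP1]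

theorem unimod_conj' {P : Mat} (hP : IsUnit P) (X : Mat) :
    unimod (P⁻¹ * X * P) = P⁻¹ * unimod X * P := by
  rw [unimod, unimod, det_conj' hP, mul_smul_comm, smul_mul_assoc]

theorem unimod_mul_of_det_eq_one (X : Mat) {N : Mat} (hN : N.det = 1) :
    unimod (X * N) = unimod X * N := by
  rw [unimod, unimod, det_mul, hN, mul_one, smul_mul_assoc]

theorem lagrangian_eulerian_stress_coincide_general (F : Mat) (hF : 0 < F.det)
    (Ci : Mat) (h1 : Ci.det = 1) (c10 c01 : ℝ) :
    F * ((Fᵀ * F)⁻¹ *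
        dev (c10 • (unimod (Fᵀ * F) * Ci⁻¹) - c01 • (Ci * (unimod (Fᵀ * F))⁻¹))) * Fᵀ =
      c10 • dev (unimod (F * Ci⁻¹ * Fᵀ)) - c01 • dev ((unimod (F * Ci⁻¹ * Fᵀ))⁻¹) := by
  have hFu : IsUnit F.det := hF.ne'.isUnit
  have hFT : IsUnit Fᵀ := (isUnit_transpose F).mpr ((isUnit_iff_isUnit_det F).mpr hFu)
  have hCi : Ci⁻¹.det = 1 := by rw [det_nonsing_inv, h1, Ring.inverse_one]
  set M := unimod (Fᵀ * F * Ci⁻¹)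
  have hM : unimod (Fᵀ * F) * Ci⁻¹ = M := (unimod_mul_of_det_eq_one _ hCi).symm
  have hMinv : Ci * (unimod (Fᵀ * F))⁻¹ = M⁻¹ := by
    rw [← hM, Matrix.mul_inv_rev, nonsing_inv_nonsing_inv _ (h1 ▸ isUnit_one)]
  have hBe : F * Ci⁻¹ * Fᵀ = Fᵀ⁻¹ * (Fᵀ * F * Ci⁻¹) * Fᵀ := by
    simp only [← mul_assoc, nonsing_inv_mul _ (isUnit_det_transpose _ hFu), one_mul]
  have hpush (X : Mat) : F * ((Fᵀ * F)⁻¹ * X) * Fᵀ = Fᵀ⁻¹ * X * Fᵀ := by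
    rw [Matrix.mul_inv_rev, ← mul_assoc, ← mul_assoc, mul_nonsing_inv _ hFu, one_mul]
  rw [hM, hMinv]
  calc F * ((Fᵀ * F)⁻¹ * dev (c10 • M - c01 • M⁻¹)) * Fᵀ
      = Fᵀ⁻¹ * (c10 • dev M - c01 • dev M⁻¹) * Fᵀ := by rw [hpush, dev_sub, dev_smul, dev_smul]
    _ = c10 • dev (Fᵀ⁻¹ * M * Fᵀ) - c01 • dev (Fᵀ⁻¹ * M * Fᵀ)⁻¹ := by
      rw [inv_conj' hFT, dev_conj' hFT, dev_conj' hFT, mul_sub, sub_mul, mul_smul_comm,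
        smul_mul_assoc, mul_smul_comm, smul_mul_assoc]
    _ = _ := by rw [← unimod_conj' hFT, ← hBe]

/-- the push-forward of the Lagrangian Mooney–Rivlin second
Piola–Kirchhoff stress `T̃ = C⁻¹·(c₁₀·C̄·Cᵢ⁻¹ − c₀₁·Cᵢ·C̄⁻¹)^D` equals the Eulerian
Kirchhoff stress: `F·T̃·Fᵀ = c₁₀·(B̄ₑ)^D − c₀₁·(B̄ₑ⁻¹)^D`, where `C = Fᵀ·F` and
`Bₑ = F·Cᵢ⁻¹·Fᵀ`. -/
theorem lagrangian_eulerian_stress_coincide (F : Mat) (hF : 0 < F.det)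
    (Ci : Mat) (hCi : Ci.PosDef) (h1 : Ci.det = 1) (c10 c01 : ℝ) :
    F * ((Fᵀ * F)⁻¹ *
        dev (c10 • (unimod (Fᵀ * F) * Ci⁻¹) - c01 • (Ci * (unimod (Fᵀ * F))⁻¹))) * Fᵀ =
      c10 • dev (unimod (F * Ci⁻¹ * Fᵀ)) - c01 • dev ((unimod (F * Ci⁻¹ * Fᵀ))⁻¹) :=
  lagrangian_eulerian_stress_coincide_general F hF Ci h1 c10 c01
end
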